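/- arXiv:1210.5155 — 7 statements merged into one kernel-verified Lean document; each statement's English description precedes it below -/
import Mathlib

section
/- Main Lemma. Let K be a field and fix a monomial order on K[x₁,…,x_r]. Let d ∈ ℕ, let λ : K[x]_d → K be a nonzero K-linear functional on the space of homogeneous polynomials of degree d, and let I ⊆ K[x₁,…,x_r] be a homogeneous ideal such that I ∩ K[x]_d = ker λ. Let P, Δ ∈ K[x]_d be homogeneous of degree d, let N_P be a normal form of P with respect to I and let N_Δ be a normal form of Δ with respect to I. If λ(Δ) ≠ 0, then N_Δ ≠ 0 and λ(Δ)·N_P = λ(P)·N_Δ as polynomials in K[x₁,…,x_r]. -/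
open MvPolynomial

/-- A monomial order on exponent vectors in `Fin r →₀ ℕ`: a total order compatible with
addition which is a well-order. -/
structure MonomialOrd (r : ℕ) where
  lt : (Fin r →₀ ℕ) → (Fin r →₀ ℕ) → Prop
  irrefl : ∀ a, ¬ lt a a
  trans : ∀ a b c, lt a b → lt b c → lt a c
  total : ∀ a b, a ≠ b → lt a b ∨ lt b a
  add_right : ∀ a b c, lt a b → lt (a + c) (b + c)
  wf : WellFounded lt

variable {K : Type} [Field K] {r : ℕ}

/-- `m` is the exponent of the leading monomial of `f`: it occurs in `f` and is greater
than every other monomial occurring in `f`. -/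
def IsLeadMonomial (o : MonomialOrd r) (f : MvPolynomial (Fin r) K) (m : Fin r →₀ ℕ) : Prop :=
  m ∈ f.support ∧ ∀ m' ∈ f.support, m' ≠ m → o.lt m' m

/-- `Lt(I)`: the ideal generated by the leading monomials of all nonzero elements of `I`. -/
noncomputable def ltIdeal (o : MonomialOrd r) (I : Ideal (MvPolynomial (Fin r) K)) :
    Ideal (MvPolynomial (Fin r) K) :=
  Ideal.span {g | ∃ f ∈ I, f ≠ 0 ∧ ∃ m, IsLeadMonomial o f m ∧ g = monomial m (1 : K)}

/-- `N` is a normal form of `f` with respect to `I`: `f - N ∈ I` and no monomial occurring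
in `N` belongs to `Lt(I)`. -/
def IsNormalForm (o : MonomialOrd r) (I : Ideal (MvPolynomial (Fin r) K))
    (f N : MvPolynomial (Fin r) K) : Prop :=
  f - N ∈ I ∧ ∀ m ∈ N.support, monomial m (1 : K) ∉ ltIdeal o I

/-- A homogeneous ideal: one containing all homogeneous components of its elements. -/
def IsHomogeneousIdeal (I : Ideal (MvPolynomial (Fin r) K)) : Prop :=
  ∀ f ∈ I, ∀ d : ℕ, MvPolynomial.homogeneousComponent d f ∈ I

/-! Normal forms are unique: if two of them are congruent modulo `I`, their difference lies
in `I` but has no monomial in `Lt(I)`, whereas a nonzero element of `I` has its leading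
monomial there. Since `λ(Δ)·P - λ(P)·Δ` lies in `ker λ ⊆ I`, the normal forms `λ(Δ)·N_P` and
`λ(P)·N_Δ` of `λ(Δ)·P` and `λ(P)·Δ` coincide. -/

section NormalForm

variable (o : MonomialOrd r)

theorem MonomialOrd.exists_isLeadMonomial {f : MvPolynomial (Fin r) K} (hf : f ≠ 0) :
    ∃ m, IsLeadMonomial o f m := by
  -- Finite sets are well-founded for the reversed order; totality makes maximal elements greatest.
  have : IsStrictOrder _ (flip o.lt) :=
    { irrefl := o.irrefl, trans := fun _ _ _ hab hbc => o.trans _ _ _ hbc hab }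
  obtain ⟨m, hm⟩ := support_nonempty.mpr hf
  obtain ⟨⟨m, hm⟩, -, hmax⟩ :=
    (f.support.finite_toSet.wellFoundedOn (r := flip o.lt)).has_min Set.univ ⟨⟨m, hm⟩, trivial⟩
  exact ⟨m, hm, fun m' hm' hne =>
    (o.total m' m hne).resolve_right fun hlt => hmax ⟨m', hm'⟩ trivial hlt⟩

theorem eq_zero_of_mem_of_forall_monomial_notMem_ltIdeal {I : Ideal (MvPolynomial (Fin r) K)}
    {f : MvPolynomial (Fin r) K} (hfI : f ∈ I)
    (hf : ∀ m ∈ f.support, monomial m (1 : K) ∉ ltIdeal o I) : f = 0 := by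
  by_contra hf0
  obtain ⟨m, hm⟩ := o.exists_isLeadMonomial hf0
  exact hf m hm.1 (Ideal.subset_span ⟨f, hfI, hf0, m, hm, rfl⟩)

variable {o} {I : Ideal (MvPolynomial (Fin r) K)} {f g N M : MvPolynomial (Fin r) K}

theorem IsNormalForm.smul (hN : IsNormalForm o I f N) (c : K) :
    IsNormalForm o I (c • f) (c • N) :=
  ⟨by simpa only [smul_sub] using I.smul_of_tower_mem c hN.1,
    fun m hm => hN.2 m (support_smul hm)⟩

theorem IsNormalForm.eq_of_sub_mem (hN : IsNormalForm o I f N) (hM : IsNormalForm o I g M)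
    (hfg : f - g ∈ I) : N = M := by
  classical
  have hNM : N - M ∈ I := by
    have : N - M = (f - g) - (f - N) + (g - M) := by abel
    exact this ▸ I.add_mem (I.sub_mem hfg hN.1) hM.1
  refine sub_eq_zero.mp (eq_zero_of_mem_of_forall_monomial_notMem_ltIdeal o hNM fun m hm => ?_)
  rcases Finset.mem_union.mp (support_sub (Fin r) N M hm) with hm | hm
  exacts [hN.2 m hm, hM.2 m hm]

theorem IsNormalForm.mem_of_eq_zero (hN : IsNormalForm o I f N) (h0 : N = 0) : f ∈ I := by
  simpa [h0] using hN.1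

end NormalForm

theorem main_lemma_general (o : MonomialOrd r) (d : ℕ)
    (lam : MvPolynomial.homogeneousSubmodule (Fin r) K d →ₗ[K] K)
    (I : Ideal (MvPolynomial (Fin r) K))
    (hker : ∀ (Q : MvPolynomial (Fin r) K)
      (hQ : Q ∈ MvPolynomial.homogeneousSubmodule (Fin r) K d),
      Q ∈ I ↔ lam ⟨Q, hQ⟩ = 0)
    (P Δ : MvPolynomial (Fin r) K)
    (hP : P ∈ MvPolynomial.homogeneousSubmodule (Fin r) K d)
    (hΔ : Δ ∈ MvPolynomial.homogeneousSubmodule (Fin r) K d)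
    (NP NΔ : MvPolynomial (Fin r) K)
    (hNP : IsNormalForm o I P NP) (hNΔ : IsNormalForm o I Δ NΔ)
    (h : lam ⟨Δ, hΔ⟩ ≠ 0) :
    NΔ ≠ 0 ∧ lam ⟨Δ, hΔ⟩ • NP = lam ⟨P, hP⟩ • NΔ := by
  refine ⟨fun h0 => h ((hker Δ hΔ).mp (hNΔ.mem_of_eq_zero h0)), ?_⟩
  set Q : MvPolynomial.homogeneousSubmodule (Fin r) K d :=
    lam ⟨Δ, hΔ⟩ • ⟨P, hP⟩ - lam ⟨P, hP⟩ • ⟨Δ, hΔ⟩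
  have hQ : lam Q = 0 := by simp only [Q, map_sub, map_smul, smul_eq_mul, mul_comm, sub_self]
  exact (hNP.smul _).eq_of_sub_mem (hNΔ.smul _) ((hker Q Q.2).mpr hQ)

/-- **Main Lemma.** If `λ : K[x]_d → K` is a nonzero linear functional whose kernel is
`I ∩ K[x]_d` for a homogeneous ideal `I`, `P, Δ` are homogeneous of degree `d` with normal
forms `N_P, N_Δ` with respect to `I`, and `λ(Δ) ≠ 0`, then `N_Δ ≠ 0` and
`λ(Δ)·N_P = λ(P)·N_Δ`. -/
theorem main_lemma (o : MonomialOrd r) (d : ℕ)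
    (lam : MvPolynomial.homogeneousSubmodule (Fin r) K d →ₗ[K] K) (hlam : lam ≠ 0)
    (I : Ideal (MvPolynomial (Fin r) K)) (hI : IsHomogeneousIdeal I)
    (hker : ∀ (Q : MvPolynomial (Fin r) K)
      (hQ : Q ∈ MvPolynomial.homogeneousSubmodule (Fin r) K d),
      Q ∈ I ↔ lam ⟨Q, hQ⟩ = 0)
    (P Δ : MvPolynomial (Fin r) K)
    (hP : P ∈ MvPolynomial.homogeneousSubmodule (Fin r) K d)
    (hΔ : Δ ∈ MvPolynomial.homogeneousSubmodule (Fin r) K d)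
    (NP NΔ : MvPolynomial (Fin r) K)
    (hNP : IsNormalForm o I P NP) (hNΔ : IsNormalForm o I Δ NΔ)
    (h : lam ⟨Δ, hΔ⟩ ≠ 0) :
    NΔ ≠ 0 ∧ lam ⟨Δ, hΔ⟩ • NP = lam ⟨P, hP⟩ • NΔ :=
  main_lemma_general o d lam I hker P Δ hP hΔ NP NΔ hNP hNΔ h
end

section
/- Let β₀, β₁, …, β_r be nonzero vectors in ℝʳ such that there exists ξ ∈ ℝʳ with ⟨βᵢ, ξ⟩ > 0 for all i = 0,…,r (the list is polarized). Let ε ∈ ℝʳ be regular with respect to the list [β₀,…,β_r] and suppose ε ∈ Cone(β₁,…,β_r). Then there exists a unique l ∈ {1,…,r} such that ε ∈ Cone(β₀, β₁, …, β̂_l, …, β_r), i.e. the cone generated by all of β₀,…,β_r except β_l. -/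
open MvPolynomial

noncomputable section

/-- The standard inner product on `ℝʳ`. -/
def dotp {r : ℕ} (v w : Fin r → ℝ) : ℝ := ∑ i, v i * w i

/-- The linear polynomial `v₁x₁ + … + v_r x_r` associated to a vector `v ∈ ℝʳ`. -/
def linPoly {r : ℕ} (v : Fin r → ℝ) : MvPolynomial (Fin r) ℝ := ∑ i, C (v i) * X i

/-- The fraction field of `ℝ[x₁,…,x_r]`. -/
abbrev Frac (r : ℕ) := FractionRing (MvPolynomial (Fin r) ℝ)

/-- The canonical embedding of `ℝ[x₁,…,x_r]` into its fraction field. -/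
def emb {r : ℕ} (p : MvPolynomial (Fin r) ℝ) : Frac r := algebraMap _ _ p

/-- A real constant viewed inside the fraction field `Frac r`. -/
def cst {r : ℕ} (a : ℝ) : Frac r := emb (C a)

/-- `v` lies in the cone generated by the vectors `α i`, `i ∈ s`. -/
def InCone {r n : ℕ} (α : Fin n → Fin r → ℝ) (s : Finset (Fin n)) (v : Fin r → ℝ) : Prop :=
  ∃ c : Fin n → ℝ, (∀ i ∈ s, 0 ≤ c i) ∧ v = ∑ i ∈ s, c i • α i

/-- The cone generated by the vectors `α i`, `i ∈ s`, as a set. -/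
def coneSet {r n : ℕ} (α : Fin n → Fin r → ℝ) (s : Finset (Fin n)) : Set (Fin r → ℝ) :=
  {v | InCone α s v}

/-- The list `α` is polarized: some `ξ` pairs strictly positively with every `α i`. -/
def Polarized {r n : ℕ} (α : Fin n → Fin r → ℝ) : Prop :=
  ∃ ξ : Fin r → ℝ, ∀ i, 0 < dotp (α i) ξ

/-- `ε` is regular with respect to the list `α`: it lies in no proper subspace spanned by a
subset of the list. -/
def RegularWrt {r n : ℕ} (α : Fin n → Fin r → ℝ) (ε : Fin r → ℝ) : Prop :=
  ∀ s : Set (Fin n), Submodule.span ℝ (α '' s) ≠ ⊤ → ε ∉ Submodule.span ℝ (α '' s)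

/-- A set of indices is generating if the corresponding vectors span `ℝʳ`. -/
def Generating {r n : ℕ} (α : Fin n → Fin r → ℝ) (J : Set (Fin n)) : Prop :=
  Submodule.span ℝ (α '' J) = ⊤

/-- The fraction `P / ∏ᵢ αᵢ^{mᵢ}` in the fraction field. -/
def fracOf {r n : ℕ} (α : Fin n → Fin r → ℝ) (P : MvPolynomial (Fin r) ℝ) (m : Fin n → ℕ) :
    Frac r :=
  emb P / ∏ i, emb (linPoly (α i)) ^ m i

/-- `R_𝔄`: the span of all fractions `P / ∏ᵢ αᵢ^{mᵢ}`. -/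
def Rspace {r n : ℕ} (α : Fin n → Fin r → ℝ) : Submodule ℝ (Frac r) :=
  Submodule.span ℝ {x | ∃ P m, x = fracOf α P m}

/-- `G_𝔄`: the span of the fractions `1 / ∏ᵢ αᵢ^{mᵢ}` with generating support. -/
def Gspace {r n : ℕ} (α : Fin n → Fin r → ℝ) : Submodule ℝ (Frac r) :=
  Submodule.span ℝ {x | ∃ m : Fin n → ℕ, Generating α {i | 0 < m i} ∧ x = fracOf α 1 m}

/-- `NG_𝔄`: the span of the fractions `P / ∏ᵢ αᵢ^{mᵢ}` with non-generating support. -/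
def NGspace {r n : ℕ} (α : Fin n → Fin r → ℝ) : Submodule ℝ (Frac r) :=
  Submodule.span ℝ {x | ∃ P m, ¬ Generating α {i | 0 < m i} ∧ x = fracOf α P m}

/-- `Φ_σ = 1 / ∏_{j ∈ σ} αⱼ`. -/
def Phi {r n : ℕ} (α : Fin n → Fin r → ℝ) (σ : Finset (Fin n)) : Frac r :=
  (∏ j ∈ σ, emb (linPoly (α j)))⁻¹

/-- `(αⱼ)_{j ∈ σ}` is a basis of `ℝʳ`. -/
def IsConeBasis {r n : ℕ} (α : Fin n → Fin r → ℝ) (σ : Finset (Fin n)) : Prop :=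
  LinearIndependent ℝ (fun j : {x // x ∈ σ} => α j.1) ∧
    Submodule.span ℝ (α '' ↑σ) = ⊤

/-- The Gram determinant `det[⟨αⱼ, α_k⟩]_{j,k ∈ σ}`. -/
def gram {r n : ℕ} (α : Fin n → Fin r → ℝ) (σ : Finset (Fin n)) : ℝ :=
  Matrix.det (Matrix.of fun j k : {x // x ∈ σ} => dotp (α j.1) (α k.1))

/-- A Jeffrey–Kirwan functional for `(𝔄, ε)`. -/
def IsJKFunctional {r n : ℕ} (α : Fin n → Fin r → ℝ) (ε : Fin r → ℝ)
    (lam : Frac r →ₗ[ℝ] ℝ) : Prop :=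
  (∀ x ∈ NGspace α, lam x = 0) ∧
  (∀ m : Fin n → ℕ, Generating α {i | 0 < m i} → (∑ i, m i) ≠ r →
    lam (fracOf α 1 m) = 0) ∧
  (∀ σ : Finset (Fin n), IsConeBasis α σ →
    (InCone α σ ε → lam (Phi α σ) = 1 / Real.sqrt (gram α σ)) ∧
    (¬ InCone α σ ε → lam (Phi α σ) = 0))

/-- The ideal `I_{𝔄,ε}` generated by the products `∏_{j∈J} αⱼ` over all `J` such that
`ε ∉ Cone(αᵢ : i ∉ J)`. -/
def JKIdeal {r n : ℕ} (α : Fin n → Fin r → ℝ) (ε : Fin r → ℝ) :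
    Ideal (MvPolynomial (Fin r) ℝ) :=
  Ideal.span {g | ∃ J : Finset (Fin n), ¬ InCone α Jᶜ ε ∧ g = ∏ j ∈ J, linPoly (α j)}

/-- `H` is a hyperplane of `ℝʳ` spanned by a subset of the list `α`. -/
def IsHyperplaneOf {r n : ℕ} (α : Fin n → Fin r → ℝ) (H : Submodule ℝ (Fin r → ℝ)) : Prop :=
  (∃ s : Set (Fin n), H = Submodule.span ℝ (α '' s)) ∧ Module.finrank ℝ H = r - 1

/-- `Cone(𝔄)` minus the union of the hyperplanes spanned by subsets of `𝔄`. -/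
def chamberComplement {r n : ℕ} (α : Fin n → Fin r → ℝ) : Set (Fin r → ℝ) :=
  coneSet α Finset.univ \ ⋃ H ∈ {H | IsHyperplaneOf α H}, (H : Set (Fin r → ℝ))

/-- A chamber of `𝔄`: a connected component of `Cone(𝔄) ∖ ⋃_{H ∈ ℋ(𝔄)} H`. -/
def IsChamber {r n : ℕ} (α : Fin n → Fin r → ℝ) (c : Set (Fin r → ℝ)) : Prop :=
  ∃ x ∈ chamberComplement α, c = connectedComponentIn (chamberComplement α) x

/-! Regularity of `ε ∈ Cone(β₁,…,β_r)` forces `β₁,…,β_r` to span, hence to be a basis, in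
which `ε` has coordinates `c` and `β₀` has coordinates `a`. Then `ε ∈ Cone(β₀,…,β̂_l,…,β_r)`
exactly when some `t ≥ 0` has `c - t a ≥ 0` with `(c - t a)_l = 0`, i.e. when `l` wins the
minimum ratio test for `c / a`; polarization gives some `aⱼ > 0`, so there is a winner.
Regularity also says that `ε` is never a combination of fewer than `r` of the `βᵢ`: this
makes `c > 0`, and it rules out ties, since a tie between `l ≠ k` writes `ε` through `β₀`
and the `r - 2` vectors other than `β_l, β_k`. -/

open Finset

section Cone

variable {r n : ℕ} {α : Fin n → Fin r → ℝ}

lemma inCone_iff_exists_sum_univ {s : Finset (Fin n)} {v : Fin r → ℝ} :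
    InCone α s v ↔
      ∃ d : Fin n → ℝ, (∀ i, 0 ≤ d i) ∧ (∀ i ∉ s, d i = 0) ∧ v = ∑ i, d i • α i := by
  classical
  constructor
  · rintro ⟨d, hd, rfl⟩
    refine ⟨fun i => if i ∈ s then d i else 0, fun i => ?_, fun i hi => if_neg hi, ?_⟩
    · dsimp only
      split_ifs with hi
      exacts [hd i hi, le_rfl]
    · simp only [ite_smul, zero_smul, sum_ite_mem, univ_inter]
  · rintro ⟨d, hd, hs, rfl⟩
    refine ⟨d, fun i _ => hd i, (sum_subset (subset_univ s) fun i _ hi => ?_).symm⟩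
    rw [hs i hi, zero_smul]

lemma inCone_erase_iff_s4 {l : Fin n} {v : Fin r → ℝ} :
    InCone α (univ.erase l) v ↔
      ∃ d : Fin n → ℝ, (∀ i, 0 ≤ d i) ∧ d l = 0 ∧ v = ∑ i, d i • α i := by
  simp [inCone_iff_exists_sum_univ]

lemma sum_smul_mem_span_image {s : Set (Fin n)} {w : Fin n → ℝ} (hw : ∀ i ∉ s, w i = 0) :
    ∑ i, w i • α i ∈ Submodule.span ℝ (α '' s) := by
  refine Submodule.sum_mem _ fun i _ => ?_
  by_cases hi : i ∈ s
  · exact Submodule.smul_mem _ _ (Submodule.subset_span (Set.mem_image_of_mem α hi))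
  · rw [hw i hi, zero_smul]
    exact Submodule.zero_mem _

lemma RegularWrt.span_eq_top {ε : Fin r → ℝ} (hreg : RegularWrt α ε) {s : Set (Fin n)}
    (h : ε ∈ Submodule.span ℝ (α '' s)) : Submodule.span ℝ (α '' s) = ⊤ :=
  of_not_not fun h' => hreg s h' h

lemma RegularWrt.le_card_support {ε : Fin r → ℝ} (hreg : RegularWrt α ε) {w : Fin n → ℝ}
    (hw : ε = ∑ i, w i • α i) : r ≤ #{i | w i ≠ 0} := by
  set S : Finset (Fin n) := {i | w i ≠ 0}
  have htop : Submodule.span ℝ (α '' S) = ⊤ := by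
    refine hreg.span_eq_top ?_
    rw [hw]
    exact sum_smul_mem_span_image fun i hi => by simpa [S] using hi
  calc r = Module.finrank ℝ (⊤ : Submodule ℝ (Fin r → ℝ)) := by
        rw [finrank_top, Module.finrank_fin_fun]
    _ = Module.finrank ℝ (Submodule.span ℝ (Set.range fun i : S => α i)) := by
      rw [← htop, Set.image_eq_range]
      rfl
    _ ≤ #S := (finrank_range_le_card _).trans_eq (Fintype.card_coe _)

end Cone

lemma RegularWrt.ne_sum_of_eq_zero_of_eq_zero {r : ℕ} {β : Fin (r + 1) → Fin r → ℝ}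
    {ε : Fin r → ℝ} (hreg : RegularWrt β ε) {w : Fin (r + 1) → ℝ} {i j : Fin (r + 1)}
    (hij : i ≠ j) (hi : w i = 0) (hj : w j = 0) : ε ≠ ∑ k, w k • β k := by
  intro hw
  have hsub : ({k | w k ≠ 0} : Finset (Fin (r + 1))) ⊆ {i, j}ᶜ := by
    intro k hk
    simp only [mem_filter, mem_univ, true_and] at hk
    simp only [mem_compl, mem_insert, mem_singleton, not_or]
    constructor <;> rintro rfl <;> contradiction
  have hcard := (hreg.le_card_support hw).trans (card_le_card hsub)
  have htwo := card_le_univ ({i, j} : Finset (Fin (r + 1)))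
  rw [card_compl, card_pair hij, Fintype.card_fin] at hcard
  rw [card_pair hij, Fintype.card_fin] at htwo
  omega

lemma exists_pos_of_dotp_sum_smul_pos {r : ℕ} {ι : Type*} [Fintype ι] {ξ : Fin r → ℝ}
    {u : ι → Fin r → ℝ} (hu : ∀ j, 0 < dotp (u j) ξ) {a : ι → ℝ}
    (ha : 0 < dotp (∑ j, a j • u j) ξ) : ∃ j, 0 < a j := by
  by_contra! h
  have hsum : dotp (∑ j, a j • u j) ξ = ∑ j, a j * dotp (u j) ξ := by
    change (∑ j, a j • u j) ⬝ᵥ ξ = ∑ j, a j * u j ⬝ᵥ ξ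
    simp only [sum_dotProduct, smul_dotProduct, smul_eq_mul]
  rw [hsum] at ha
  exact ha.not_ge (sum_nonpos fun j _ => mul_nonpos_of_nonpos_of_nonneg (h j) (hu j).le)

section RatioTest

variable {ι : Type*} {c a : ι → ℝ}

/-- The minimum ratio test of the simplex method: moving from `c` along `-a`, a first
coordinate to vanish is one minimizing `c j / a j` over `a j > 0`. -/
lemma exists_min_ratio [Fintype ι] (hc : ∀ j, 0 ≤ c j) (ha : ∃ j, 0 < a j) :
    ∃ l t, 0 ≤ t ∧ t * a l = c l ∧ ∀ j, t * a j ≤ c j := by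
  obtain ⟨j₀, hj₀⟩ := ha
  obtain ⟨l, hl, hmin⟩ := exists_min_image {j | 0 < a j} (fun j => c j / a j)
    ⟨j₀, by simpa using hj₀⟩
  have hal : 0 < a l := by simpa using hl
  have ht : 0 ≤ c l / a l := div_nonneg (hc l) hal.le
  refine ⟨l, c l / a l, ht, div_mul_cancel₀ _ hal.ne', fun j => ?_⟩
  rcases le_or_gt (a j) 0 with haj | haj
  · exact (mul_nonpos_of_nonneg_of_nonpos ht haj).trans (hc j)
  · exact (le_div_iff₀ haj).1 (hmin j (by simpa using haj))

lemma min_ratio_eq (hc : ∀ j, 0 < c j) {l k : ι} {t t' : ℝ}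
    (ht : 0 ≤ t) (hl : t * a l = c l) (hle : ∀ j, t * a j ≤ c j)
    (ht' : 0 ≤ t') (hk : t' * a k = c k) (hle' : ∀ j, t' * a j ≤ c j) : t = t' := by
  rcases lt_trichotomy t t' with htt' | htt' | htt'
  · nlinarith [hle' l, hc l]
  · exact htt'
  · nlinarith [hle k, hc k]

end RatioTest

section Coordinates

variable {r : ℕ} {β : Fin (r + 1) → Fin r → ℝ} (b : Module.Basis (Fin r) ℝ (Fin r → ℝ))

lemma exists_basis_eq_comp_succ (h : Submodule.span ℝ (β '' {0}ᶜ) = ⊤) :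
    ∃ b : Module.Basis (Fin r) ℝ (Fin r → ℝ), ⇑b = β ∘ Fin.succ :=
  ⟨basisOfTopLeSpanOfCardEqFinrank (β ∘ Fin.succ)
    (by rw [Set.range_comp, Fin.range_succ, h]) (by simp),
    coe_basisOfTopLeSpanOfCardEqFinrank _ _ _⟩

lemma equivFun_eq_of_eq_sum (hb : ⇑b = β ∘ Fin.succ) {v : Fin r → ℝ} {d : Fin (r + 1) → ℝ}
    (hv : v = ∑ i, d i • β i) :
    b.equivFun v = d 0 • b.equivFun (β 0) + fun j => d j.succ := by
  have hβ : ∀ j, β j.succ = b j := fun j => by rw [hb]; rfl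
  simp_rw [hv, Fin.sum_univ_succ, map_add, map_smul, hβ, ← b.equivFun_symm_apply,
    LinearEquiv.apply_symm_apply]

lemma eq_sum_cons_sub_smul (hb : ⇑b = β ∘ Fin.succ) (v : Fin r → ℝ) (t : ℝ) :
    v = ∑ i, (Fin.cons t (b.equivFun v - t • b.equivFun (β 0)) : Fin (r + 1) → ℝ) i • β i := by
  simp only [Fin.sum_univ_succ, Fin.cons_zero, Fin.cons_succ, Pi.sub_apply, Pi.smul_apply,
    smul_eq_mul, sub_smul, sum_sub_distrib, mul_smul, ← smul_sum, ← Function.comp_apply (f := β),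
    ← hb, b.sum_equivFun]
  abel

lemma inCone_erase_succ_iff (hb : ⇑b = β ∘ Fin.succ) {v : Fin r → ℝ} {l : Fin r} :
    InCone β (univ.erase l.succ) v ↔
      ∃ t, 0 ≤ t ∧ t * b.equivFun (β 0) l = b.equivFun v l ∧
        ∀ j, t * b.equivFun (β 0) j ≤ b.equivFun v j := by
  rw [inCone_erase_iff_s4]
  constructor
  · rintro ⟨d, hd, hdl, hv⟩
    have hcoord := congrFun (equivFun_eq_of_eq_sum b hb hv)
    refine ⟨d 0, hd 0, ?_, fun j => ?_⟩
    · simp [hcoord, hdl]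
    · simpa [hcoord] using hd j.succ
  · rintro ⟨t, ht, hl, hle⟩
    refine ⟨_, fun i => ?_, ?_, eq_sum_cons_sub_smul b hb v t⟩
    · cases i using Fin.cases with
      | zero => exact ht
      | succ j => simpa using hle j
    · simp only [Fin.cons_succ, Pi.sub_apply, Pi.smul_apply, smul_eq_mul, hl, sub_self]

end Coordinates

theorem exists_unique_erase_cone_general {r : ℕ} (β : Fin (r + 1) → Fin r → ℝ)
    (hpol : Polarized β) (ε : Fin r → ℝ)
    (hreg : RegularWrt β ε) (hε : InCone β (Finset.univ.erase 0) ε) :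
    ∃! l : Fin (r + 1), l ≠ 0 ∧ InCone β (Finset.univ.erase l) ε := by
  obtain ⟨d, hd, hd0, hεd⟩ := inCone_erase_iff_s4.1 hε
  obtain ⟨b, hb⟩ := exists_basis_eq_comp_succ <| hreg.span_eq_top <|
    hεd ▸ sum_smul_mem_span_image fun i hi => by simp_all
  set c := b.equivFun ε
  set a := b.equivFun (β 0)
  have hsplit := eq_sum_cons_sub_smul b hb ε
  have hc : ∀ j, 0 < c j := fun j => by
    have hcj : 0 ≤ c j := by simpa [c, equivFun_eq_of_eq_sum b hb hεd, hd0] using hd j.succ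
    refine hcj.lt_of_ne' fun hj => hreg.ne_sum_of_eq_zero_of_eq_zero
      (Fin.succ_ne_zero j).symm rfl
      (show c j - 0 * a j = 0 by rw [hj, zero_mul, sub_zero]) (hsplit 0)
  obtain ⟨ξ, hξ⟩ := hpol
  have ha : ∃ j, 0 < a j := exists_pos_of_dotp_sum_smul_pos (u := b)
    (fun j => by simpa [hb] using hξ j.succ) (by simpa only [a, b.sum_equivFun] using hξ 0)
  obtain ⟨l, t, ht, hl, hle⟩ := exists_min_ratio (fun j => (hc j).le) ha
  refine ⟨l.succ, ⟨l.succ_ne_zero, (inCone_erase_succ_iff b hb).2 ⟨t, ht, hl, hle⟩⟩, ?_⟩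
  rintro _ ⟨hk0, hk⟩
  obtain ⟨k, rfl⟩ := Fin.exists_succ_eq.2 hk0
  obtain ⟨t', ht', htk, hle'⟩ := (inCone_erase_succ_iff b hb).1 hk
  have htt' : t = t' := min_ratio_eq hc ht hl hle ht' htk hle'
  by_contra hkl
  exact hreg.ne_sum_of_eq_zero_of_eq_zero (fun h => hkl h.symm)
    (show c l - t * a l = 0 by rw [hl, sub_self])
    (show c k - t * a k = 0 by rw [htt', htk, sub_self]) (hsplit t)

/-- Let `β₀, …, β_r` be a polarized list of nonzero vectors in `ℝʳ`, and let `ε` be regular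
with respect to the list with `ε ∈ Cone(β₁,…,β_r)`. Then there is a unique `l ∈ {1,…,r}`
with `ε ∈ Cone(β₀,…,β̂_l,…,β_r)`. -/
theorem exists_unique_erase_cone {r : ℕ} (β : Fin (r + 1) → Fin r → ℝ)
    (hβ : ∀ i, β i ≠ 0) (hpol : Polarized β) (ε : Fin r → ℝ)
    (hreg : RegularWrt β ε) (hε : InCone β (Finset.univ.erase 0) ε) :
    ∃! l : Fin (r + 1), l ≠ 0 ∧ InCone β (Finset.univ.erase l) ε :=
  exists_unique_erase_cone_general β hpol ε hreg hε
end
end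

section
/- Let β₀, β₁, …, β_r be nonzero vectors in ℝʳ such that β₁,…,β_r is a basis of ℝʳ, write β₀ = Σᵢ₌₁ʳ bᵢβᵢ, and let l ∈ {1,…,r} with b_l ≠ 0. Then in the fraction field Frac(ℝ[x₁,…,x_r]) the following identity holds: 1/(β₀·β₁⋯β̂_l⋯β_r) = (1/b_l)·1/(β₁⋯β_r) − Σ_{i=1, i≠l}^{r} (bᵢ/b_l)·1/(β₀·β₁⋯β̂ᵢ⋯β_r), where each product runs over the listed linear polynomials with the hatted factor omitted. -/
open MvPolynomial

noncomputable section

/-!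
Over the common denominator `β₀ β₁ ⋯ β_r`, the fraction `1 / (β₀ ∏_{j ≠ i} βⱼ)` has numerator `βᵢ`
and `1 / (β₁ ⋯ β_r)` has numerator `β₀`, so after clearing denominators the identity is the linear
relation `β₀ = Σᵢ bᵢ βᵢ` solved for `β_l`.
-/

lemma linPoly_ne_zero {r : ℕ} {v : Fin r → ℝ} (hv : v ≠ 0) : linPoly v ≠ 0 := by
  obtain ⟨i, hi⟩ := Function.ne_iff.mp hv
  intro h
  apply hi
  have := congrArg (coeff (Finsupp.single i 1)) h
  simpa [linPoly, coeff_sum, coeff_X, Finsupp.single_left_inj, Finset.sum_ite_eq] using this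

lemma emb_linPoly_ne_zero {r : ℕ} {v : Fin r → ℝ} (hv : v ≠ 0) : emb (linPoly v) ≠ 0 :=
  (map_ne_zero_iff _ (IsFractionRing.injective (MvPolynomial (Fin r) ℝ) (Frac r))).mpr
    (linPoly_ne_zero hv)

lemma cst_eq_algebraMap {r : ℕ} (a : ℝ) : (cst a : Frac r) = algebraMap ℝ (Frac r) a := by
  rw [cst, emb, ← algebraMap_eq, ← IsScalarTower.algebraMap_apply]

lemma linPoly_sum {r n : ℕ} (s : Finset (Fin n)) (c : Fin n → ℝ) (v : Fin n → Fin r → ℝ) :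
    linPoly (∑ i ∈ s, c i • v i) = ∑ i ∈ s, C (c i) * linPoly (v i) := by
  simp only [linPoly, Finset.sum_apply, Pi.smul_apply, smul_eq_mul, map_sum, Finset.sum_mul,
    Finset.mul_sum, map_mul, mul_assoc]
  exact Finset.sum_comm

lemma emb_linPoly_sum {r n : ℕ} (s : Finset (Fin n)) (c : Fin n → ℝ) (v : Fin n → Fin r → ℝ) :
    emb (linPoly (∑ i ∈ s, c i • v i)) = ∑ i ∈ s, cst (c i) * emb (linPoly (v i)) := by
  simp only [linPoly_sum, emb, cst, map_sum, map_mul]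

section PartialFractions

variable {K ι : Type*} [Field K] [DecidableEq ι]

lemma one_div_mul_prod_erase {E : Finset ι} {f : ι → K} (a : K) {i : ι} (hi : i ∈ E)
    (hfi : f i ≠ 0) :
    1 / (a * ∏ j ∈ E.erase i, f j) = f i / (a * ∏ j ∈ E, f j) := by
  rw [← Finset.mul_prod_erase E f hi, mul_left_comm, ← mul_div_mul_left 1 _ hfi, mul_one]

lemma one_div_mul_prod_erase_eq_sub_sum {E : Finset ι} {f c : ι → K} {a : K} {l : ι}
    (hl : l ∈ E) (ha : a ≠ 0) (hf : ∀ i ∈ E, f i ≠ 0) (hcl : c l ≠ 0)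
    (hrel : a = ∑ i ∈ E, c i * f i) :
    1 / (a * ∏ i ∈ E.erase l, f i)
      = (c l)⁻¹ * (1 / ∏ i ∈ E, f i)
        - ∑ i ∈ E.erase l, c i / c l * (1 / (a * ∏ j ∈ E.erase i, f j)) := by
  have hP : ∏ i ∈ E, f i ≠ 0 := Finset.prod_ne_zero_iff.mpr hf
  have hsum : ∑ i ∈ E.erase l, c i / c l * (1 / (a * ∏ j ∈ E.erase i, f j))
      = (c l)⁻¹ * ((a - c l * f l) / (a * ∏ i ∈ E, f i)) := by
    calc ∑ i ∈ E.erase l, c i / c l * (1 / (a * ∏ j ∈ E.erase i, f j))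
        = ∑ i ∈ E.erase l, (c l)⁻¹ * (c i * f i / (a * ∏ j ∈ E, f j)) :=
          Finset.sum_congr rfl fun i hi => by
            rw [one_div_mul_prod_erase a (Finset.mem_of_mem_erase hi)
              (hf i (Finset.mem_of_mem_erase hi))]
            ring
      _ = (c l)⁻¹ * ((a - c l * f l) / (a * ∏ i ∈ E, f i)) := by
          rw [← Finset.mul_sum, ← Finset.sum_div, Finset.sum_erase_eq_sub hl, ← hrel]
  rw [hsum, one_div_mul_prod_erase a hl (hf l hl)]
  field_simp
  ring

end PartialFractions

theorem fraction_identity_general {r : ℕ} (β : Fin (r + 1) → Fin r → ℝ)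
    (hβ : ∀ i, β i ≠ 0)
    (b : Fin (r + 1) → ℝ)
    (hb : β 0 = ∑ i ∈ Finset.univ.erase 0, b i • β i)
    (l : Fin (r + 1)) (hl : l ≠ 0) (hbl : b l ≠ 0) :
    1 / (emb (linPoly (β 0)) * ∏ i ∈ (Finset.univ.erase 0).erase l, emb (linPoly (β i)))
      = cst (b l)⁻¹ * (1 / ∏ i ∈ Finset.univ.erase 0, emb (linPoly (β i)))
        - ∑ i ∈ (Finset.univ.erase 0).erase l,
            cst (b i / b l) *
              (1 / (emb (linPoly (β 0)) *
                ∏ j ∈ (Finset.univ.erase 0).erase i, emb (linPoly (β j)))) := by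
  have hrel := congrArg (emb ∘ linPoly) hb
  simp only [Function.comp_apply, emb_linPoly_sum, cst_eq_algebraMap] at hrel ⊢
  simp only [map_inv₀, map_div₀]
  exact one_div_mul_prod_erase_eq_sub_sum (Finset.mem_erase.mpr ⟨hl, Finset.mem_univ l⟩)
    (emb_linPoly_ne_zero (hβ 0)) (fun i _ => emb_linPoly_ne_zero (hβ i))
    ((map_ne_zero (algebraMap ℝ (Frac r))).mpr hbl) hrel

/-- The partial fraction identity
`1/(β₀β₁⋯β̂_l⋯β_r) = (1/b_l)·1/(β₁⋯β_r) − Σ_{i≠l} (bᵢ/b_l)·1/(β₀β₁⋯β̂ᵢ⋯β_r)`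
in the fraction field of `ℝ[x₁,…,x_r]`, where `β₀ = Σ bᵢβᵢ` and `b_l ≠ 0`. -/
theorem fraction_identity {r : ℕ} (β : Fin (r + 1) → Fin r → ℝ)
    (hβ : ∀ i, β i ≠ 0)
    (hindep : LinearIndependent ℝ (fun i : Fin r => β i.succ))
    (hspan : Submodule.span ℝ (Set.range fun i : Fin r => β i.succ) = ⊤)
    (b : Fin (r + 1) → ℝ)
    (hb : β 0 = ∑ i ∈ Finset.univ.erase 0, b i • β i)
    (l : Fin (r + 1)) (hl : l ≠ 0) (hbl : b l ≠ 0) :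
    1 / (emb (linPoly (β 0)) * ∏ i ∈ (Finset.univ.erase 0).erase l, emb (linPoly (β i)))
      = cst (b l)⁻¹ * (1 / ∏ i ∈ Finset.univ.erase 0, emb (linPoly (β i)))
        - ∑ i ∈ (Finset.univ.erase 0).erase l,
            cst (b i / b l) *
              (1 / (emb (linPoly (β 0)) *
                ∏ j ∈ (Finset.univ.erase 0).erase i, emb (linPoly (β j)))) :=
  fraction_identity_general β hβ b hb l hl hbl
end
end

section
/- Let β₀, β₁, …, β_r be vectors in ℝʳ such that β₁,…,β_r is a basis of ℝʳ. Write β₀ = Σᵢ₌₁ʳ bᵢβᵢ and ε = Σᵢ₌₁ʳ eᵢβᵢ with eᵢ > 0 for all i, and assume ε is regular with respect to the list [β₀, β₁, …, β_r]. Then for each l ∈ {1,…,r}: ε ∈ Cone(β₀, β₁, …, β̂_l, …, β_r) if and only if b_l > 0 and b_l/e_l > bᵢ/eᵢ for all i ∈ {1,…,r} with i ≠ l. -/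
open MvPolynomial

noncomputable section

/-! Since `β₁, …, β_r` are independent, `ε ∈ Cone(β₀, …, β̂_l, …, β_r)` amounts to coefficients
`c ≥ 0` with `e_l = c₀ b_l` and `eᵢ = c₀ bᵢ + cᵢ` for `i ≠ l`. Regularity makes every `cᵢ`
nonzero, as otherwise `ε` would lie in the span of `r - 1` vectors; then `c₀ > 0`, and
`bᵢ / eᵢ < 1 / c₀ = b_l / e_l` is `cᵢ > 0`. Conversely `c₀ = e_l / b_l` works. -/

theorem Fin.sum_univ_erase_zero {M : Type*} [AddCommGroup M] {n : ℕ} (f : Fin (n + 1) → M) :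
    ∑ i ∈ Finset.univ.erase 0, f i = ∑ j : Fin n, f j.succ := by
  rw [Finset.sum_erase_eq_sub (Finset.mem_univ 0), Fin.sum_univ_succ, add_sub_cancel_left]

section Coordinates

variable {M : Type*} [AddCommGroup M] [Module ℝ M] {n : ℕ} {β : Fin (n + 1) → M}

theorem eq_of_sum_erase_zero_smul_eq (hindep : LinearIndependent ℝ fun i : Fin n => β i.succ)
    {f g : Fin (n + 1) → ℝ}
    (h : ∑ i ∈ Finset.univ.erase 0, f i • β i = ∑ i ∈ Finset.univ.erase 0, g i • β i)
    {i : Fin (n + 1)} (hi : i ≠ 0) : f i = g i := by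
  simp only [Fin.sum_univ_erase_zero] at h
  simpa using Fintype.linearIndependent_iffₛ.mp hindep _ _ h (i.pred hi)

theorem sum_erase_smul_eq_of_eq_sum {b : Fin (n + 1) → ℝ}
    (hb : β 0 = ∑ i ∈ Finset.univ.erase 0, b i • β i) {l : Fin (n + 1)} (hl : l ≠ 0)
    (c : Fin (n + 1) → ℝ) :
    ∑ i ∈ Finset.univ.erase l, c i • β i =
      ∑ i ∈ Finset.univ.erase 0, (c 0 * b i + if i = l then 0 else c i) • β i := by
  have hdrop : ∑ i ∈ Finset.univ.erase 0, (if i = l then 0 else c i) • β i =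
      ∑ i ∈ (Finset.univ.erase 0).erase l, c i • β i := by
    rw [← Finset.add_sum_erase _ _ (Finset.mem_erase.mpr ⟨hl, Finset.mem_univ l⟩), if_pos rfl,
      zero_smul, zero_add]
    exact Finset.sum_congr rfl fun i hi => by rw [if_neg (Finset.ne_of_mem_erase hi)]
  rw [← Finset.add_sum_erase _ _ (Finset.mem_erase.mpr ⟨hl.symm, Finset.mem_univ 0⟩),
    Finset.erase_right_comm]
  simp only [add_smul, Finset.sum_add_distrib, mul_smul, ← Finset.smul_sum, ← hb, hdrop]

end Coordinates

theorem Submodule.span_image_ne_top_of_card_lt {r n : ℕ} (α : Fin n → Fin r → ℝ)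
    {s : Finset (Fin n)} (hs : s.card < r) : Submodule.span ℝ (α '' s) ≠ ⊤ := by
  classical
  intro htop
  have hrank := finrank_span_finset_le_card (R := ℝ) (s.image α)
  rw [Finset.coe_image, Set.finrank, htop, finrank_top, Module.finrank_fin_fun] at hrank
  exact (hrank.trans Finset.card_image_le).not_gt hs

theorem RegularWrt.coeff_ne_zero {r n : ℕ} {α : Fin n → Fin r → ℝ} {ε : Fin r → ℝ}
    (hreg : RegularWrt α ε) {s : Finset (Fin n)} (hs : s.card ≤ r) {c : Fin n → ℝ}
    (hε : ε = ∑ i ∈ s, c i • α i) {i : Fin n} (hi : i ∈ s) : c i ≠ 0 := by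
  intro hci
  refine hreg _ (Submodule.span_image_ne_top_of_card_lt α (s := s.erase i) ?_) ?_
  · rw [Finset.card_erase_of_mem hi]
    have := Finset.card_pos.mpr ⟨i, hi⟩
    omega
  · rw [hε, ← Finset.sum_erase _ (by rw [hci, zero_smul])]
    exact Submodule.sum_smul_mem _ _ fun j hj => Submodule.subset_span ⟨j, hj, rfl⟩

theorem inCone_erase_iff_general {r : ℕ} (β : Fin (r + 1) → Fin r → ℝ)
    (hindep : LinearIndependent ℝ (fun i : Fin r => β i.succ))
    (b e : Fin (r + 1) → ℝ) (ε : Fin r → ℝ)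
    (hb : β 0 = ∑ i ∈ Finset.univ.erase 0, b i • β i)
    (he : ε = ∑ i ∈ Finset.univ.erase 0, e i • β i)
    (hepos : ∀ i ∈ Finset.univ.erase (0 : Fin (r + 1)), 0 < e i)
    (hreg : RegularWrt β ε)
    (l : Fin (r + 1)) (hl : l ≠ 0) :
    InCone β (Finset.univ.erase l) ε ↔
      0 < b l ∧ ∀ i : Fin (r + 1), i ≠ 0 → i ≠ l → b i / e i < b l / e l := by
  have hei : ∀ i ≠ 0, 0 < e i := fun i hi =>
    hepos i (Finset.mem_erase.mpr ⟨hi, Finset.mem_univ i⟩)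
  have hel := hei l hl
  constructor
  · rintro ⟨c, hc, hε⟩
    have hcoord : ∀ i ≠ 0, e i = c 0 * b i + if i = l then 0 else c i := fun i hi =>
      eq_of_sum_erase_zero_smul_eq hindep (he ▸ hε ▸ sum_erase_smul_eq_of_eq_sum hb hl c) hi
    have hcpos : ∀ i ∈ Finset.univ.erase l, 0 < c i := fun i hi =>
      (hc i hi).lt_of_ne' (hreg.coeff_ne_zero (by simp) hε hi)
    have hc0 : 0 < c 0 := hcpos 0 (Finset.mem_erase.mpr ⟨hl.symm, Finset.mem_univ 0⟩)
    have hel' : e l = c 0 * b l := by simpa using hcoord l hl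
    have hbl : 0 < b l := pos_of_mul_pos_right (hel' ▸ hel) hc0.le
    refine ⟨hbl, fun i hi hil => ?_⟩
    have hci := hcpos i (Finset.mem_erase.mpr ⟨hil, Finset.mem_univ i⟩)
    have hei' : e i = c 0 * b i + c i := by simpa [hil] using hcoord i hi
    rw [div_lt_div_iff₀ (hei i hi) hel, hei', hel']
    nlinarith [mul_pos hbl hci]
  · rintro ⟨hbl, hlt⟩
    refine ⟨fun i => if i = 0 then e l / b l else e i - e l / b l * b i, fun i hi => ?_, ?_⟩
    · rcases eq_or_ne i 0 with rfl | hi0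
      · simpa using (div_pos hel hbl).le
      · have := (div_lt_div_iff₀ (hei i hi0) hel).mp (hlt i hi0 (Finset.ne_of_mem_erase hi))
        dsimp only
        rw [if_neg hi0, sub_nonneg, div_mul_eq_mul_div, div_le_iff₀ hbl]
        linarith
    · rw [he, sum_erase_smul_eq_of_eq_sum hb hl]
      refine Finset.sum_congr rfl fun i hi => ?_
      rcases eq_or_ne i l with rfl | hil
      · simp [div_mul_cancel₀ _ hbl.ne']
      · simp [hil, Finset.ne_of_mem_erase hi]

/-- Let `β₁,…,β_r` be a basis of `ℝʳ`, `β₀ = Σ bᵢβᵢ`, `ε = Σ eᵢβᵢ` with all `eᵢ > 0`, and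
`ε` regular with respect to `[β₀,…,β_r]`. Then for each `l ∈ {1,…,r}`,
`ε ∈ Cone(β₀,…,β̂_l,…,β_r)` iff `b_l > 0` and `b_l/e_l > bᵢ/eᵢ` for all `i ≠ l`. -/
theorem inCone_erase_iff {r : ℕ} (β : Fin (r + 1) → Fin r → ℝ)
    (hindep : LinearIndependent ℝ (fun i : Fin r => β i.succ))
    (hspan : Submodule.span ℝ (Set.range fun i : Fin r => β i.succ) = ⊤)
    (b e : Fin (r + 1) → ℝ) (ε : Fin r → ℝ)
    (hb : β 0 = ∑ i ∈ Finset.univ.erase 0, b i • β i)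
    (he : ε = ∑ i ∈ Finset.univ.erase 0, e i • β i)
    (hepos : ∀ i ∈ Finset.univ.erase (0 : Fin (r + 1)), 0 < e i)
    (hreg : RegularWrt β ε)
    (l : Fin (r + 1)) (hl : l ≠ 0) :
    InCone β (Finset.univ.erase l) ε ↔
      0 < b l ∧ ∀ i : Fin (r + 1), i ≠ 0 → i ≠ l → b i / e i < b l / e l :=
  inCone_erase_iff_general β hindep b e ε hb he hepos hreg l hl
end
end

section
/- Let 𝔄 = [α₁,…,αₙ] be a polarized list of nonzero vectors spanning ℝʳ, let c be a chamber of 𝔄, and let σ ⊆ {1,…,n} be such that (αⱼ)_{j∈σ} is a basis of ℝʳ. Then c ∩ Cone(αⱼ : j ∈ σ) ≠ ∅ if and only if c ⊆ Cone(αⱼ : j ∈ σ). -/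
open MvPolynomial

noncomputable section

/-! Since `(αⱼ)_{j∈σ}` is a basis, `Cone(αⱼ : j ∈ σ)` is the set where all coordinates in this
basis are nonnegative. The zero set of the `j`-th coordinate is the span of `αₖ, k ∈ σ ∖ {j}`,
a hyperplane of `𝔄`, so no coordinate vanishes on `Cone(𝔄) ∖ ⋃ ℋ(𝔄)`. By the intermediate value
theorem each coordinate then has constant sign on a chamber, which is connected. -/

theorem IsPreconnected.lt_of_lt_of_forall_ne {X β : Type*} [TopologicalSpace X] [LinearOrder β]
    [TopologicalSpace β] [OrderClosedTopology β] {s : Set X} (hs : IsPreconnected s)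
    {f : X → β} (hf : ContinuousOn f s) {a : β} (hfa : ∀ z ∈ s, f z ≠ a) {x y : X}
    (hx : x ∈ s) (hy : y ∈ s) (hax : a < f x) : a < f y := by
  by_contra! hya
  obtain ⟨z, hz, hza⟩ := hs.intermediate_value hy hx hf ⟨hya, hax.le⟩
  exact hfa z hz hza

namespace IsConeBasis

variable {r n : ℕ} {α : Fin n → Fin r → ℝ} {σ : Finset (Fin n)}

def basis (hσ : IsConeBasis α σ) : Module.Basis σ ℝ (Fin r → ℝ) :=
  Module.Basis.mk hσ.1 (Set.image_eq_range α σ ▸ hσ.2.ge)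

theorem basis_apply (hσ : IsConeBasis α σ) (j : σ) : hσ.basis j = α j :=
  Module.Basis.mk_apply _ _ j

theorem card_eq (hσ : IsConeBasis α σ) : σ.card = r := by
  simpa using (Module.finrank_eq_card_basis hσ.basis).symm

theorem inCone_iff_forall_repr_nonneg (hσ : IsConeBasis α σ) {v : Fin r → ℝ} :
    InCone α σ v ↔ ∀ j, 0 ≤ hσ.basis.repr v j := by
  have hsum : ∀ c : Fin n → ℝ, ∑ i ∈ σ, c i • α i = ∑ j : σ, c j • hσ.basis j := fun c => by
    rw [← Finset.sum_coe_sort σ]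
    simp only [basis_apply]
  constructor
  · rintro ⟨c, hc, rfl⟩ j
    rw [hsum, hσ.basis.repr_sum_self]
    exact hc j j.2
  · intro h
    refine ⟨fun i => if hi : i ∈ σ then hσ.basis.repr v ⟨i, hi⟩ else 0, fun i hi => ?_, ?_⟩
    · simpa [hi] using h ⟨i, hi⟩
    · rw [hsum]
      simp only [Finset.coe_mem, dite_true, Subtype.coe_eta]
      exact (hσ.basis.sum_repr v).symm

theorem image_erase (hσ : IsConeBasis α σ) (j : σ) : α '' ↑(σ.erase j) = hσ.basis '' {j}ᶜ := by
  ext w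
  simp only [Set.mem_image, Finset.coe_erase, Set.mem_sdiff, Finset.mem_coe,
    Set.mem_singleton_iff, Set.mem_compl_iff, Subtype.exists, basis_apply]
  exact ⟨fun ⟨i, ⟨hi, hij⟩, hw⟩ => ⟨i, hi, fun h => hij (congrArg Subtype.val h), hw⟩,
    fun ⟨i, hi, hij, hw⟩ => ⟨i, ⟨hi, fun h => hij (Subtype.ext h)⟩, hw⟩⟩

theorem mem_span_erase_iff_repr_eq_zero (hσ : IsConeBasis α σ) (j : σ) {v : Fin r → ℝ} :
    v ∈ Submodule.span ℝ (α '' ↑(σ.erase j)) ↔ hσ.basis.repr v j = 0 := by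
  rw [hσ.image_erase, hσ.basis.mem_span_image, Set.subset_compl_singleton_iff]
  simp

theorem isHyperplaneOf_span_erase (hσ : IsConeBasis α σ) (j : σ) :
    IsHyperplaneOf α (Submodule.span ℝ (α '' ↑(σ.erase j))) := by
  refine ⟨⟨_, rfl⟩, ?_⟩
  have hli : LinearIndepOn ℝ α ↑(σ.erase j) :=
    LinearIndepOn.mono hσ.1 (Finset.coe_subset.2 (Finset.erase_subset _ _))
  rw [Set.image_eq_range, finrank_span_eq_card hli]
  simp [hσ.card_eq]

theorem repr_ne_zero_of_mem_chamberComplement (hσ : IsConeBasis α σ) {v : Fin r → ℝ}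
    (hv : v ∈ chamberComplement α) (j : σ) : hσ.basis.repr v j ≠ 0 := fun h0 =>
  hv.2 (Set.mem_biUnion (hσ.isHyperplaneOf_span_erase j)
    ((hσ.mem_span_erase_iff_repr_eq_zero j).2 h0))

theorem subset_coneSet_of_isPreconnected (hσ : IsConeBasis α σ) {c : Set (Fin r → ℝ)}
    (hc : IsPreconnected c) (hcα : c ⊆ chamberComplement α) (hcσ : (c ∩ coneSet α σ).Nonempty) :
    c ⊆ coneSet α σ := by
  obtain ⟨y, hy⟩ := hcσ
  intro z hz
  refine hσ.inCone_iff_forall_repr_nonneg.2 fun j => le_of_lt ?_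
  have hne : ∀ w ∈ c, hσ.basis.repr w j ≠ 0 := fun w hw =>
    hσ.repr_ne_zero_of_mem_chamberComplement (hcα hw) j
  have hpos : 0 < hσ.basis.repr y j :=
    (hσ.inCone_iff_forall_repr_nonneg.1 hy.2 j).lt_of_ne' (hne y hy.1)
  exact hc.lt_of_lt_of_forall_ne (hσ.basis.coord j).continuous_of_finiteDimensional.continuousOn
    hne hy.1 hz hpos

end IsConeBasis

theorem chamber_inter_cone_iff_subset_general {r n : ℕ} (α : Fin n → Fin r → ℝ)
    (c : Set (Fin r → ℝ)) (hc : IsChamber α c)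
    (σ : Finset (Fin n)) (hσ : IsConeBasis α σ) :
    (c ∩ coneSet α σ).Nonempty ↔ c ⊆ coneSet α σ := by
  obtain ⟨x, hx, rfl⟩ := hc
  exact ⟨hσ.subset_coneSet_of_isPreconnected isPreconnected_connectedComponentIn
      (connectedComponentIn_subset _ _),
    fun hsub => ⟨x, mem_connectedComponentIn hx, hsub (mem_connectedComponentIn hx)⟩⟩

/-- For a chamber `c` of a polarized spanning list `𝔄` and a basis `(αⱼ)_{j∈σ}` from `𝔄`,
the chamber `c` meets `Cone(αⱼ : j ∈ σ)` iff it is contained in it. -/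
theorem chamber_inter_cone_iff_subset {r n : ℕ} (α : Fin n → Fin r → ℝ)
    (hα : ∀ i, α i ≠ 0) (hpol : Polarized α)
    (hspan : Submodule.span ℝ (Set.range α) = ⊤)
    (c : Set (Fin r → ℝ)) (hc : IsChamber α c)
    (σ : Finset (Fin n)) (hσ : IsConeBasis α σ) :
    (c ∩ coneSet α σ).Nonempty ↔ c ⊆ coneSet α σ :=
  chamber_inter_cone_iff_subset_general α c hc σ hσ
end
end

section
/- Geometric description of the ideal I_{𝔄,ε}. Let 𝔄 = [α₁,…,αₙ] be a polarized list of nonzero vectors in ℝʳ and let ε ∈ ℝʳ be regular with respect to 𝔄 with ε ∈ Cone(α₁,…,αₙ). Then I_{𝔄,ε} equals the ideal of ℝ[x₁,…,x_r] generated by the products ∏_{i : αᵢ ∈ H⁺} αᵢ, where H ranges over the hyperplanes of ℝʳ spanned by subsets of {α₁,…,αₙ} and H⁺ denotes the open half-space bounded by H that contains ε (well-defined since ε is regular, hence ε ∉ H). -/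
open MvPolynomial

noncomputable section

/-!
A generator `∏_{j∈J} αⱼ` of `I_{𝔄,ε}` comes, by Farkas' lemma, with a linear form `f` such that
`f ε > 0` and `f αᵢ ≤ 0` for `i ∉ J`; then `∏_{f αᵢ > 0} αᵢ` divides it. Such an `f` can be moved,
keeping `f ε` and every sign `f αᵢ ≤ 0`, until its kernel is spanned by the `αᵢ` it kills: as long
as these `αᵢ` and `ε` do not span `ℝʳ`, add the multiple `t • g` of a form `g` vanishing on them
for which `t` is the root of smallest absolute value of the `f αᵢ + t g αᵢ`. No sign changes and a
new `αᵢ` is killed. Conversely, a hyperplane with `ε` on its positive side separates `ε` from the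
cone of the `αᵢ` outside that side.
-/

open Submodule in
theorem Module.Dual.ker_eq_of_sup_span_singleton_eq_top {K V : Type*} [DivisionRing K]
    [AddCommGroup V] [Module K V] {f : Module.Dual K V} {W : Submodule K V} {x : V}
    (hW : W ≤ LinearMap.ker f) (hx : f x ≠ 0) (htop : W ⊔ K ∙ x = ⊤) : LinearMap.ker f = W := by
  have hdisj : (K ∙ x) ⊓ LinearMap.ker f = ⊥ :=
    (disjoint_span_singleton.2 fun h => absurd h hx).symm.eq_bot
  calc LinearMap.ker f = (W ⊔ K ∙ x) ⊓ LinearMap.ker f := by rw [htop, top_inf_eq]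
    _ = W := by rw [sup_inf_assoc_of_le _ hW, hdisj, sup_bot_eq]

section OrderedField

variable {𝕜 V ι : Type*} [Field 𝕜] [LinearOrder 𝕜] [IsStrictOrderedRing 𝕜]
  [AddCommGroup V] [Module 𝕜 V]

open Submodule

theorem Module.Dual.apply_nonpos_of_mem_hull {f : Module.Dual 𝕜 V} {s : Set V}
    (hs : ∀ x ∈ s, f x ≤ 0) {x : V} (hx : x ∈ PointedCone.hull 𝕜 s) : f x ≤ 0 := by
  have : PointedCone.hull 𝕜 s ≤ (PointedCone.positive 𝕜 𝕜).comap (-f) :=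
    span_le.2 fun y hy => by simpa using hs y hy
  simpa using this hx

-- Farkas' lemma, by Fourier–Motzkin elimination of one generator at a time.
theorem exists_dual_separating_of_notMem_hull [DecidableEq ι] (v : ι → V) (s : Finset ι)
    {b : V} (hb : b ∉ PointedCone.hull 𝕜 (v '' s)) :
    ∃ f : Module.Dual 𝕜 V, (∀ i ∈ s, f (v i) ≤ 0) ∧ 0 < f b := by
  induction s using Finset.induction_on generalizing v b with
  | empty =>
    obtain ⟨f, hf⟩ := Module.Projective.exists_dual_ne_zero 𝕜 (x := b) (by
      rintro rfl
      exact hb (zero_mem _))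
    exact ⟨(f b)⁻¹ • f, by simp, by simp [hf]⟩
  | insert a s ha ih =>
    have hull_insert : PointedCone.hull 𝕜 (v '' ↑(insert a s))
        = PointedCone.hull 𝕜 (insert (v a) (v '' s)) := by
      rw [Finset.coe_insert, Set.image_insert_eq]
    rw [hull_insert] at hb
    obtain ⟨f, hfs, hfb⟩ := ih v fun h => hb (span_mono (Set.subset_insert _ _) h)
    rcases le_or_gt (f (v a)) 0 with hfa | hfa
    · exact ⟨f, Finset.forall_mem_insert _ _ _ |>.2 ⟨hfa, hfs⟩, hfb⟩
    -- Project along `v a` onto `ker f`; a separating functional downstairs pulls back.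
    set P : V →ₗ[𝕜] V := f (v a) • LinearMap.id - f.smulRight (v a) with hP
    have hPa : P (v a) = 0 := by simp [hP]
    have hPb : P b ∉ PointedCone.hull 𝕜 ((P ∘ v) '' s) := by
      intro hPb
      replace hPb : P b ∈ (PointedCone.hull 𝕜 (v '' s)).map P := by
        rwa [PointedCone.map, PointedCone.hull, map_span, ← Set.image_comp]
      obtain ⟨y, hy, hPy⟩ := hPb
      apply hb
      rw [mem_span_insert]
      have hfy : f y ≤ 0 := f.apply_nonpos_of_mem_hull (by simpa using hfs) hy
      refine ⟨⟨f (b - y) / f (v a), div_nonneg (by simp; linarith) hfa.le⟩, y, hy, ?_⟩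
      rw [Nonneg.mk_smul, ← sub_eq_iff_eq_add]
      have : f (v a) • (b - y) = f (b - y) • v a := by
        have hPy' : f (v a) • y - f y • v a = f (v a) • b - f b • v a := by simpa [hP] using hPy
        rw [smul_sub, map_sub, sub_smul]
        linear_combination (norm := module) -hPy'
      rw [div_eq_inv_mul, mul_smul, ← this, inv_smul_smul₀ hfa.ne']
    obtain ⟨g, hgs, hgb⟩ := ih (P ∘ v) hPb
    refine ⟨g ∘ₗ P, Finset.forall_mem_insert _ _ _ |>.2 ⟨by simp [hPa], hgs⟩, hgb⟩

theorem exists_abs_mul_le_abs_and_add_mul_eq_zero [Fintype ι] {a b : ι → 𝕜}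
    (hab : ∀ i, a i = 0 → b i = 0) (hb : ∃ i, b i ≠ 0) :
    ∃ t : 𝕜, (∀ i, |t * b i| ≤ |a i|) ∧ ∃ i, a i ≠ 0 ∧ a i + t * b i = 0 := by
  obtain ⟨i₀, hi₀, hmin⟩ := (Finset.univ.filter fun i => b i ≠ 0).exists_min_image
    (fun i => |a i / b i|) (by simpa [Finset.Nonempty] using hb)
  replace hi₀ : b i₀ ≠ 0 := by simpa using hi₀
  refine ⟨-(a i₀ / b i₀), fun i => ?_, i₀, mt (hab i₀) hi₀, by field_simp; ring⟩
  rcases eq_or_ne (b i) 0 with hbi | hbi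
  · simp [hbi]
  calc |-(a i₀ / b i₀) * b i| = |a i₀ / b i₀| * |b i| := by rw [abs_mul, abs_neg]
    _ ≤ |a i / b i| * |b i| :=
        mul_le_mul_of_nonneg_right (hmin i (by simpa using hbi)) (abs_nonneg _)
    _ = |a i| := by rw [← abs_mul, div_mul_cancel₀ _ hbi]

theorem Module.Dual.exists_fewer_nonzeros_of_sup_span_singleton_ne_top [Fintype ι] {v : ι → V}
    (hv : span 𝕜 (Set.range v) = ⊤) {f : Module.Dual 𝕜 V} {x : V}
    (htop : span 𝕜 (v '' {i | f (v i) = 0}) ⊔ 𝕜 ∙ x ≠ ⊤) :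
    ∃ f' : Module.Dual 𝕜 V, (∀ i, f (v i) ≤ 0 → f' (v i) ≤ 0) ∧ f' x = f x ∧
      {i | f' (v i) ≠ 0} ⊂ {i | f (v i) ≠ 0} := by
  obtain ⟨g, hg0, hgW⟩ := exists_dual_map_eq_bot_of_lt_top htop.lt_top inferInstance
  rw [← LinearMap.le_ker_iff_map] at hgW
  have hgx : g x = 0 := hgW (mem_sup_right (mem_span_singleton_self x))
  have hg_zero : ∀ i, f (v i) = 0 → g (v i) = 0 := fun i hi =>
    hgW (mem_sup_left (subset_span ⟨i, hi, rfl⟩))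
  have hg_ne : ∃ i, g (v i) ≠ 0 := by
    by_contra! h
    exact hg0 (LinearMap.ext_on_range hv fun i => by simpa using h i)
  obtain ⟨t, hle, i₁, hi₁, hzero⟩ := exists_abs_mul_le_abs_and_add_mul_eq_zero
    (a := fun i => f (v i)) (b := fun i => g (v i)) hg_zero hg_ne
  refine ⟨f + t • g, fun i hi => ?_, by simp [hgx], ?_⟩
  · have := hle i
    rw [abs_of_nonpos hi] at this
    simp only [LinearMap.add_apply, LinearMap.smul_apply, smul_eq_mul]
    linarith [le_abs_self (t * g (v i))]
  · refine (Set.ssubset_iff_of_subset fun i => mt fun (hfi : f (v i) = 0) => ?_).2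
      ⟨i₁, hi₁, fun h => h (by simpa using hzero)⟩
    have := hle i
    simp_all

theorem exists_ker_eq_span_zeros [Fintype ι] {v : ι → V}
    (hv : span 𝕜 (Set.range v) = ⊤) (f : Module.Dual 𝕜 V) {x : V} (hx : f x ≠ 0) :
    ∃ g : Module.Dual 𝕜 V, (∀ i, f (v i) ≤ 0 → g (v i) ≤ 0) ∧ g x = f x ∧
      LinearMap.ker g = span 𝕜 (v '' {i | g (v i) = 0}) := by
  induction hN : {i | f (v i) ≠ 0}.ncard using Nat.strong_induction_on generalizing f with
  | _ N ih =>
  by_cases htop : span 𝕜 (v '' {i | f (v i) = 0}) ⊔ 𝕜 ∙ x = ⊤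
  · refine ⟨f, fun _ h => h, rfl, f.ker_eq_of_sup_span_singleton_eq_top ?_ hx htop⟩
    exact span_le.2 (by rintro _ ⟨i, hi, rfl⟩; exact hi)
  · obtain ⟨f', hf'f, hf'x, hzeros⟩ := f.exists_fewer_nonzeros_of_sup_span_singleton_ne_top hv htop
    obtain ⟨g, hgf', hgx, hker⟩ := ih _ (hN ▸ Set.ncard_lt_ncard hzeros) f' (hf'x ▸ hx) rfl
    exact ⟨g, fun i hi => hgf' i (hf'f i hi), hgx.trans hf'x, hker⟩

end OrderedField

theorem inCone_iff_mem_hull {r n : ℕ} (α : Fin n → Fin r → ℝ) (s : Finset (Fin n))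
    (v : Fin r → ℝ) : InCone α s v ↔ v ∈ PointedCone.hull ℝ (α '' s) := by
  rw [PointedCone.hull, Submodule.mem_span_image_finset_iff_exists_fun']
  constructor
  · rintro ⟨c, hc, rfl⟩
    refine ⟨fun i => ⟨max (c i) 0, le_max_right _ _⟩, Finset.sum_congr rfl fun i hi => ?_⟩
    rw [Nonneg.mk_smul, max_eq_left (hc i hi)]
  · rintro ⟨c, rfl⟩
    exact ⟨fun i => c i, fun i _ => (c i).2, by simp only [Nonneg.coe_smul]⟩

theorem span_range_eq_top_of_regularWrt {r n : ℕ} {α : Fin n → Fin r → ℝ} {ε : Fin r → ℝ}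
    (hreg : RegularWrt α ε) (hε : InCone α Finset.univ ε) :
    Submodule.span ℝ (Set.range α) = ⊤ := by
  rw [← Set.image_univ]
  by_contra htop
  refine hreg Set.univ htop (PointedCone.hull_le_span ℝ _ ?_)
  simpa using (inCone_iff_mem_hull α _ ε).1 hε

theorem jkIdeal_eq_halfspace_ideal_general {r n : ℕ}
    (α : Fin n → Fin r → ℝ)
    (ε : Fin r → ℝ) (hreg : RegularWrt α ε) (hε : InCone α Finset.univ ε) :
    JKIdeal α ε = Ideal.span {g | ∃ f : (Fin r → ℝ) →ₗ[ℝ] ℝ,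
      IsHyperplaneOf α (LinearMap.ker f) ∧ 0 < f ε ∧
      g = ∏ i ∈ Finset.univ.filter (fun i => 0 < f (α i)), linPoly (α i)} := by
  apply le_antisymm
  · rw [JKIdeal, Ideal.span_le]
    rintro _ ⟨J, hJ, rfl⟩
    rw [inCone_iff_mem_hull] at hJ
    obtain ⟨f, hfJ, hfε⟩ := exists_dual_separating_of_notMem_hull α Jᶜ hJ
    obtain ⟨g, hgf, hgε, hker⟩ :=
      exists_ker_eq_span_zeros (span_range_eq_top_of_regularWrt hreg hε) f hfε.ne'
    have hg : g ≠ 0 := by rintro rfl; simp at hgε; linarith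
    have hsub : Finset.univ.filter (fun i => 0 < g (α i)) ⊆ J := fun i hi => by
      by_contra hiJ
      simpa using (Finset.mem_filter.1 hi).2.trans_le (hgf i (hfJ i (Finset.mem_compl.2 hiJ)))
    rw [SetLike.mem_coe, ← Finset.prod_sdiff hsub]
    refine Ideal.mul_mem_left _ _ (Ideal.subset_span ⟨g, ⟨⟨_, hker⟩, ?_⟩, hgε ▸ hfε, rfl⟩)
    have := g.finrank_ker_add_one_of_ne_zero hg
    rw [Module.finrank_fin_fun] at this
    omega
  · rw [Ideal.span_le]
    rintro _ ⟨f, -, hfε, rfl⟩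
    refine Ideal.subset_span ⟨_, fun h => ?_, rfl⟩
    rw [inCone_iff_mem_hull] at h
    have := Module.Dual.apply_nonpos_of_mem_hull (f := f) (by simp) h
    linarith

/-- **Geometric description of `I_{𝔄,ε}`.** The ideal `I_{𝔄,ε}` is generated by the
products `∏_{αᵢ ∈ H⁺} αᵢ`, where `H` ranges over the hyperplanes spanned by subsets of
`𝔄` and `H⁺` is the open half-space bounded by `H` containing `ε`. -/
theorem jkIdeal_eq_halfspace_ideal {r n : ℕ}
    (α : Fin n → Fin r → ℝ) (hα : ∀ i, α i ≠ 0) (hpol : Polarized α)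
    (ε : Fin r → ℝ) (hreg : RegularWrt α ε) (hε : InCone α Finset.univ ε) :
    JKIdeal α ε = Ideal.span {g | ∃ f : (Fin r → ℝ) →ₗ[ℝ] ℝ,
      IsHyperplaneOf α (LinearMap.ker f) ∧ 0 < f ε ∧
      g = ∏ i ∈ Finset.univ.filter (fun i => 0 < f (α i)), linPoly (α i)} :=
  jkIdeal_eq_halfspace_ideal_general α ε hreg hε
end
end

section
/- The case r = 2. Let α₁,…,αₙ be a polarized list of nonzero vectors in ℝ², let ε ∈ ℝ² be regular with respect to the list with ε ∈ Cone(α₁,…,αₙ), and let 1 ≤ k ≤ n−1. Suppose that α₁,…,α_k lie strictly on one side of the line ℝε and α_{k+1},…,αₙ lie strictly on the other side. Then I_{𝔄,ε} = ⟨α₁⋯α_k, α_{k+1}⋯αₙ⟩ as ideals of ℝ[x₁,x₂], where each αᵢ is regarded as a linear polynomial. -/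
open MvPolynomial

noncomputable section

/-
Put the vectors `α i` with `f (α i) > 0` into `A` and those with `f (α i) < 0` into `B`, where
`ker f = ℝε`. A nonnegative combination of vectors from one side cannot lie on the line `ℝε`
unless it vanishes, and `ε ≠ 0`; so `ε ∉ Cone(αᵢ : i ∉ J)` as soon as `J ⊇ A` or `J ⊇ B`.
Conversely, if `i ∉ J` lies in `A` and `j ∉ J` in `B`, then `-f(α j) α i + f(α i) α j` is a
multiple `t ε` of `ε`, and pairing with a polarizing covector shows `t > 0`, so `ε ∈ Cone(α i, α j)`.
Hence the generators of `I_{𝔄,ε}` are the products over supersets of `A` or of `B`.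
-/

section Cone

variable {r n : ℕ} {α : Fin n → Fin r → ℝ} {s : Finset (Fin n)} {v : Fin r → ℝ}

lemma InCone.add {w : Fin r → ℝ} (hv : InCone α s v) (hw : InCone α s w) :
    InCone α s (v + w) := by
  obtain ⟨c, hc, rfl⟩ := hv
  obtain ⟨d, hd, rfl⟩ := hw
  refine ⟨c + d, fun i hi => add_nonneg (hc i hi) (hd i hi), ?_⟩
  simp only [Pi.add_apply, add_smul, Finset.sum_add_distrib]

lemma inCone_smul_of_mem {i : Fin n} {a : ℝ} (hi : i ∈ s) (ha : 0 ≤ a) :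
    InCone α s (a • α i) := by
  classical
  refine ⟨fun j => if j = i then a else 0, fun j _ => by dsimp only; split_ifs <;> simp [ha], ?_⟩
  simp [ite_smul, hi]

lemma InCone.eq_zero_of_nonpos (hv : InCone α s v) (g : (Fin r → ℝ) →ₗ[ℝ] ℝ)
    (hs : ∀ i ∈ s, 0 < g (α i)) (hgv : g v ≤ 0) : v = 0 := by
  obtain ⟨c, hc, rfl⟩ := hv
  have hterm : ∀ i ∈ s, 0 ≤ c i * g (α i) := fun i hi => mul_nonneg (hc i hi) (hs i hi).le
  have hzero : ∀ i ∈ s, c i * g (α i) = 0 := by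
    refine (Finset.sum_eq_zero_iff_of_nonneg hterm).1 (le_antisymm ?_ (Finset.sum_nonneg hterm))
    simpa [map_sum] using hgv
  refine Finset.sum_eq_zero fun i hi => ?_
  rw [(mul_eq_zero.1 (hzero i hi)).resolve_right (hs i hi).ne', zero_smul]

lemma not_inCone_of_forall_pos (g : (Fin r → ℝ) →ₗ[ℝ] ℝ) (hs : ∀ i ∈ s, 0 < g (α i))
    (hv : v ≠ 0) (hgv : g v ≤ 0) : ¬ InCone α s v :=
  fun hcone => hv (hcone.eq_zero_of_nonpos g hs hgv)

lemma InCone.pos_of_ne_zero (hcone : InCone α s v) (hv : v ≠ 0) (g : (Fin r → ℝ) →ₗ[ℝ] ℝ)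
    (hs : ∀ i ∈ s, 0 < g (α i)) : 0 < g v :=
  lt_of_not_ge fun hgv => hv (hcone.eq_zero_of_nonpos g hs hgv)

lemma Polarized.exists_linearMap (hpol : Polarized α) :
    ∃ g : (Fin r → ℝ) →ₗ[ℝ] ℝ, ∀ i, 0 < g (α i) := by
  obtain ⟨ξ, hξ⟩ := hpol
  exact ⟨Fintype.linearCombination ℝ ξ, fun i => by
    simpa [Fintype.linearCombination_apply, dotp] using hξ i⟩

lemma RegularWrt.ne_zero [NeZero r] {ε : Fin r → ℝ} (hreg : RegularWrt α ε) : ε ≠ 0 := by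
  rintro rfl
  exact hreg ∅ (by simp) (Submodule.zero_mem _)

end Cone

lemma exists_nonneg_smul_add_smul_eq_of_ker_eq_span {M : Type*} [AddCommGroup M] [Module ℝ M]
    {f g : M →ₗ[ℝ] ℝ} {ε a b : M} (hker : LinearMap.ker f = Submodule.span ℝ {ε})
    (hgε : 0 < g ε) (hfa : 0 < f a) (hfb : f b < 0) (hga : 0 < g a) (hgb : 0 < g b) :
    ∃ p q : ℝ, 0 ≤ p ∧ 0 ≤ q ∧ ε = p • a + q • b := by
  set w := (-f b) • a + f a • b
  have hw : w ∈ Submodule.span ℝ {ε} := by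
    rw [← hker, LinearMap.mem_ker]
    simp only [w, map_add, map_smul, smul_eq_mul]
    ring
  obtain ⟨t, ht⟩ := Submodule.mem_span_singleton.1 hw
  have hgw : 0 < g w := by
    simp only [w, map_add, map_smul, smul_eq_mul]
    nlinarith
  have htpos : 0 < t := by
    rw [← ht, map_smul, smul_eq_mul] at hgw
    exact pos_of_mul_pos_left hgw hgε.le
  refine ⟨t⁻¹ * -f b, t⁻¹ * f a, mul_nonneg (inv_nonneg.2 htpos.le) (neg_nonneg.2 hfb.le),
    mul_nonneg (inv_nonneg.2 htpos.le) hfa.le, ?_⟩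
  rw [mul_smul, mul_smul, ← smul_add]
  change ε = t⁻¹ • w
  rw [← ht, smul_smul, inv_mul_cancel₀ htpos.ne', one_smul]

section Sides

variable {r n : ℕ} {α : Fin n → Fin r → ℝ} {ε : Fin r → ℝ} {f g : (Fin r → ℝ) →ₗ[ℝ] ℝ}

lemma inCone_of_mem_of_mem (hker : LinearMap.ker f = Submodule.span ℝ {ε})
    (hg : ∀ i, 0 < g (α i)) (hgε : 0 < g ε) {s : Finset (Fin n)} {i j : Fin n}
    (hi : i ∈ s) (hj : j ∈ s) (hfi : 0 < f (α i)) (hfj : f (α j) < 0) : InCone α s ε := by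
  obtain ⟨p, q, hp, hq, hpq⟩ :=
    exists_nonneg_smul_add_smul_eq_of_ker_eq_span hker hgε hfi hfj (hg i) (hg j)
  rw [hpq]
  exact (inCone_smul_of_mem hi hp).add (inCone_smul_of_mem hj hq)

lemma not_inCone_compl_iff (hker : LinearMap.ker f = Submodule.span ℝ {ε}) (hε : ε ≠ 0)
    (hg : ∀ i, 0 < g (α i)) (hgε : 0 < g ε) {A B : Finset (Fin n)}
    (hA : ∀ i ∈ A, 0 < f (α i)) (hB : ∀ i ∈ B, f (α i) < 0) (hAB : ∀ i, i ∈ A ∨ i ∈ B)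
    (J : Finset (Fin n)) : ¬ InCone α Jᶜ ε ↔ A ⊆ J ∨ B ⊆ J := by
  have hfε : f ε = 0 := by
    rw [← LinearMap.mem_ker, hker]
    exact Submodule.mem_span_singleton_self ε
  constructor
  · intro hJ
    by_contra! hAB'
    simp only [Finset.not_subset] at hAB'
    obtain ⟨⟨i, hiA, hiJ⟩, ⟨j, hjB, hjJ⟩⟩ := hAB'
    exact hJ (inCone_of_mem_of_mem hker hg hgε (Finset.mem_compl.2 hiJ)
      (Finset.mem_compl.2 hjJ) (hA i hiA) (hB j hjB))
  · rintro (hAJ | hBJ)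
    · refine not_inCone_of_forall_pos (-f) (fun i hi => ?_) hε (by simp [hfε])
      have hiA : i ∉ A := fun hiA => Finset.mem_compl.1 hi (hAJ hiA)
      simpa using hB i ((hAB i).resolve_left hiA)
    · refine not_inCone_of_forall_pos f (fun i hi => ?_) hε hfε.le
      have hiB : i ∉ B := fun hiB => Finset.mem_compl.1 hi (hBJ hiB)
      exact hA i ((hAB i).resolve_right hiB)

end Sides

lemma jkIdeal_eq_span_pair {r n : ℕ} {α : Fin n → Fin r → ℝ} {ε : Fin r → ℝ}
    {A B : Finset (Fin n)} (h : ∀ J : Finset (Fin n), ¬ InCone α Jᶜ ε ↔ A ⊆ J ∨ B ⊆ J) :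
    JKIdeal α ε = Ideal.span {∏ i ∈ A, linPoly (α i), ∏ i ∈ B, linPoly (α i)} := by
  apply le_antisymm
  · rw [JKIdeal, Ideal.span_le]
    rintro _ ⟨J, hJ, rfl⟩
    rcases (h J).1 hJ with hAJ | hBJ
    · exact Ideal.mem_of_dvd _ (Finset.prod_dvd_prod_of_subset _ _ _ hAJ)
        (Ideal.subset_span (Set.mem_insert _ _))
    · exact Ideal.mem_of_dvd _ (Finset.prod_dvd_prod_of_subset _ _ _ hBJ)
        (Ideal.subset_span (Set.mem_insert_of_mem _ rfl))
  · rw [Ideal.span_le]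
    rintro _ (rfl | rfl)
    · exact Ideal.subset_span ⟨A, (h A).2 (Or.inl subset_rfl), rfl⟩
    · exact Ideal.subset_span ⟨B, (h B).2 (Or.inr subset_rfl), rfl⟩

theorem jkIdeal_rank_two_general {n : ℕ} (α : Fin n → Fin 2 → ℝ)
    (hpol : Polarized α)
    (ε : Fin 2 → ℝ) (hreg : RegularWrt α ε) (hε : InCone α Finset.univ ε)
    (k : ℕ)
    (f : (Fin 2 → ℝ) →ₗ[ℝ] ℝ)
    (hker : LinearMap.ker f = Submodule.span ℝ {ε})
    (hside1 : ∀ i : Fin n, (i : ℕ) < k → 0 < f (α i))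
    (hside2 : ∀ i : Fin n, k ≤ (i : ℕ) → f (α i) < 0) :
    JKIdeal α ε = Ideal.span
      {∏ i ∈ Finset.univ.filter (fun i : Fin n => (i : ℕ) < k), linPoly (α i),
       ∏ i ∈ Finset.univ.filter (fun i : Fin n => k ≤ (i : ℕ)), linPoly (α i)} := by
  obtain ⟨g, hg⟩ := hpol.exists_linearMap
  have hε0 : ε ≠ 0 := hreg.ne_zero
  have hgε : 0 < g ε := hε.pos_of_ne_zero hε0 g fun i _ => hg i
  refine jkIdeal_eq_span_pair (not_inCone_compl_iff hker hε0 hg hgε ?_ ?_ ?_)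
  · intro i hi
    exact hside1 i (Finset.mem_filter.1 hi).2
  · intro i hi
    exact hside2 i (Finset.mem_filter.1 hi).2
  · intro i
    simpa only [Finset.mem_filter, Finset.mem_univ, true_and] using lt_or_ge (i : ℕ) k

/-- **The case `r = 2`.** If `α₁,…,α_k` lie strictly on one side of the line `ℝε` and
`α_{k+1},…,αₙ` strictly on the other side, then
`I_{𝔄,ε} = ⟨α₁⋯α_k, α_{k+1}⋯αₙ⟩`. -/
theorem jkIdeal_rank_two {n : ℕ} (α : Fin n → Fin 2 → ℝ)
    (hα : ∀ i, α i ≠ 0) (hpol : Polarized α)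
    (ε : Fin 2 → ℝ) (hreg : RegularWrt α ε) (hε : InCone α Finset.univ ε)
    (k : ℕ) (hk1 : 1 ≤ k) (hk2 : k ≤ n - 1)
    (f : (Fin 2 → ℝ) →ₗ[ℝ] ℝ)
    (hker : LinearMap.ker f = Submodule.span ℝ {ε})
    (hside1 : ∀ i : Fin n, (i : ℕ) < k → 0 < f (α i))
    (hside2 : ∀ i : Fin n, k ≤ (i : ℕ) → f (α i) < 0) :
    JKIdeal α ε = Ideal.span
      {∏ i ∈ Finset.univ.filter (fun i : Fin n => (i : ℕ) < k), linPoly (α i),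
       ∏ i ∈ Finset.univ.filter (fun i : Fin n => k ≤ (i : ℕ)), linPoly (α i)} :=
  jkIdeal_rank_two_general α hpol ε hreg hε k f hker hside1 hside2
end
end
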